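/- For the GSR riffle shuffle of n cards, the probability that the top card after the shuffle is card 1 equals (1 + 2^{n-1})/2^n, which is strictly greater than 1/2. -/

import Mathlib

open Finset

namespace GSRaux

variable {n : ℕ}

/-- descent-at-`i` predicate for `τ = π.symm`. -/
def P (τ : Equiv.Perm (Fin n)) (i : Fin n) : Prop :=
  ∃ j : Fin n, (j : ℕ) = (i : ℕ) + 1 ∧ τ j < τ i

instance (τ : Equiv.Perm (Fin n)) (i : Fin n) : Decidable (P τ i) := by
  unfold P; infer_instance

lemma compl_card (A : Finset (Fin n)) : Aᶜ.card = n - A.card := by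
  simp [Finset.card_compl]

lemma card_le (A : Finset (Fin n)) : A.card ≤ n := by
  simpa using A.card_le_univ

/-- the word `sorted A ++ sorted Aᶜ` as a function. -/
def tauFun (A : Finset (Fin n)) : Fin n → Fin n := fun i =>
  if h : (i : ℕ) < A.card then A.orderEmbOfFin rfl ⟨i, h⟩
  else Aᶜ.orderEmbOfFin (compl_card A) ⟨(i : ℕ) - A.card,
    by have := i.isLt; omega⟩

lemma tauFun_mem_left {A : Finset (Fin n)} {i : Fin n} (h : (i : ℕ) < A.card) :
    tauFun A i ∈ A := by
  simp only [tauFun, dif_pos h]; exact Finset.orderEmbOfFin_mem _ _ _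

lemma tauFun_mem_right {A : Finset (Fin n)} {i : Fin n} (h : ¬ (i : ℕ) < A.card) :
    tauFun A i ∈ Aᶜ := by
  simp only [tauFun, dif_neg h]; exact Finset.orderEmbOfFin_mem _ _ _

lemma tauFun_injective (A : Finset (Fin n)) : Function.Injective (tauFun A) := by
  intro i j hij
  by_cases hi : (i : ℕ) < A.card <;> by_cases hj : (j : ℕ) < A.card
  · simp only [tauFun, dif_pos hi, dif_pos hj] at hij
    have := (A.orderEmbOfFin rfl).injective hij
    exact Fin.ext (by simpa [Fin.ext_iff] using this)
  · exact absurd (hij ▸ tauFun_mem_left hi) (by simpa using tauFun_mem_right hj)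
  · exact absurd (hij ▸ tauFun_mem_right hi) (by
      have := tauFun_mem_left hj; simp_all [Finset.mem_compl])
  · simp only [tauFun, dif_neg hi, dif_neg hj] at hij
    have := (Aᶜ.orderEmbOfFin (compl_card A)).injective hij
    have h2 : (i : ℕ) - A.card = (j : ℕ) - A.card := by simpa [Fin.ext_iff] using this
    exact Fin.ext (by omega)

/-- the permutation associated to a subset. -/
noncomputable def tauE (A : Finset (Fin n)) : Equiv.Perm (Fin n) :=
  Equiv.ofBijective (tauFun A) (Finite.injective_iff_bijective.mp (tauFun_injective A))

@[simp] lemma tauE_apply (A : Finset (Fin n)) (i : Fin n) : tauE A i = tauFun A i := rfl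


/-- initial-segment predicate. -/
def Init (A : Finset (Fin n)) : Prop := ∀ x ∈ A, (x : ℕ) < A.card

instance (A : Finset (Fin n)) : Decidable (Init A) := by unfold Init; infer_instance

lemma card_filter_lt {m : ℕ} (hm : m ≤ n) :
    ((univ : Finset (Fin n)).filter (fun x : Fin n => (x : ℕ) < m)).card = m := by
  have himg : Finset.image (Fin.castLE hm) (univ : Finset (Fin m))
      = (univ : Finset (Fin n)).filter (fun x : Fin n => (x : ℕ) < m) := by
    ext x
    simp only [mem_image, mem_filter, mem_univ, true_and]
    constructor
    · rintro ⟨y, -, rfl⟩; exact y.isLt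
    · intro hx; exact ⟨⟨(x : ℕ), hx⟩, Fin.ext rfl⟩
  rw [← himg, Finset.card_image_of_injective _ (Fin.castLE_injective hm)]
  simp

lemma init_eq_filter {A : Finset (Fin n)} (h : Init A) :
    A = (univ : Finset (Fin n)).filter (fun x : Fin n => (x : ℕ) < A.card) := by
  refine Finset.eq_of_subset_of_card_le (fun x hx => ?_) ?_
  · exact mem_filter.mpr ⟨mem_univ _, h x hx⟩
  · exact le_of_eq (card_filter_lt (card_le A))

lemma exists_notmem {A : Finset (Fin n)} (h2 : ¬ Init A) :
    ∃ y : Fin n, (y : ℕ) < A.card ∧ y ∉ A := by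
  by_contra hc
  push_neg at hc
  obtain ⟨x, hxA, hx⟩ : ∃ x ∈ A, ¬ (x : ℕ) < A.card := by
    by_contra h; push_neg at h; exact h2 h
  have hsub : (univ : Finset (Fin n)).filter (fun y : Fin n => (y : ℕ) < A.card) ⊆ A := by
    intro y hy; exact hc y (mem_filter.mp hy).2
  have : insert x ((univ : Finset (Fin n)).filter (fun y : Fin n => (y : ℕ) < A.card)) ⊆ A :=
    Finset.insert_subset hxA hsub
  have hle := Finset.card_le_card this
  rw [Finset.card_insert_of_notMem (by simp [hx]), card_filter_lt (card_le A)] at hle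
  omega

lemma descent_card {A : Finset (Fin n)} {i : Fin n} (h : P (tauE A) i) :
    (i : ℕ) + 1 = A.card := by
  obtain ⟨j, hj, hlt⟩ := h
  by_contra hne
  by_cases hjc : (j : ℕ) < A.card
  · have hic : (i : ℕ) < A.card := by omega
    simp only [tauE_apply, tauFun, dif_pos hic, dif_pos hjc] at hlt
    have := (A.orderEmbOfFin rfl).lt_iff_lt.mp hlt
    rw [Fin.mk_lt_mk] at this
    omega
  · have hic : ¬ (i : ℕ) < A.card := by omega
    simp only [tauE_apply, tauFun, dif_neg hic, dif_neg hjc] at hlt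
    have := (Aᶜ.orderEmbOfFin (compl_card A)).lt_iff_lt.mp hlt
    rw [Fin.mk_lt_mk] at this
    omega

lemma mem_iff_surj {A : Finset (Fin n)} {k : ℕ} (h : A.card = k) {x : Fin n} (hx : x ∈ A) :
    ∃ i : Fin k, A.orderEmbOfFin h i = x := by
  have : x ∈ Set.range (A.orderEmbOfFin h) := by
    rw [Finset.range_orderEmbOfFin]; exact hx
  obtain ⟨i, hi⟩ := this; exact ⟨i, hi⟩

lemma descent_at {A : Finset (Fin n)} (h1 : 0 < A.card) (h2 : ¬ Init A) :
    P (tauE A) ⟨A.card - 1, by have := card_le A; omega⟩ := by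
  obtain ⟨x, hxA, hx⟩ : ∃ x ∈ A, ¬ (x : ℕ) < A.card := by
    by_contra h; push_neg at h; exact h2 h
  have hcn : A.card < n := by have := x.isLt; omega
  obtain ⟨y, hy, hyA⟩ := exists_notmem h2
  refine ⟨⟨A.card, hcn⟩, by simp; omega, ?_⟩
  have h1' : ¬ (A.card : ℕ) < A.card := lt_irrefl _
  have h2' : (A.card - 1 : ℕ) < A.card := by omega
  simp only [tauE_apply, tauFun]
  rw [dif_neg (by simpa using h1'), dif_pos (by simpa using h2')]
  -- goal : Aᶜ.orderEmbOfFin _ ⟨A.card - A.card, _⟩ < A.orderEmbOfFin rfl ⟨A.card - 1, _⟩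
  obtain ⟨k, hk⟩ := mem_iff_surj rfl hxA
  obtain ⟨m, hm⟩ := mem_iff_surj (compl_card A) (Finset.mem_compl.mpr hyA)
  have hkle : A.orderEmbOfFin rfl k ≤ A.orderEmbOfFin rfl ⟨A.card - 1, h2'⟩ :=
    (A.orderEmbOfFin rfl).monotone (by simp [Fin.le_def]; omega)
  have hmle : Aᶜ.orderEmbOfFin (compl_card A) ⟨(A.card : ℕ) - A.card, by have := compl_card A; omega⟩
      ≤ Aᶜ.orderEmbOfFin (compl_card A) m :=
    (Aᶜ.orderEmbOfFin (compl_card A)).monotone (by simp [Fin.le_def])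
  rw [hk] at hkle
  rw [hm] at hmle
  have : (y : ℕ) < (x : ℕ) := by omega
  calc Aᶜ.orderEmbOfFin (compl_card A) ⟨(A.card : ℕ) - A.card, _⟩ ≤ y := hmle
    _ < x := by exact this
    _ ≤ _ := hkle


lemma tauFun_strictMono {A : Finset (Fin n)} (h : Init A) : StrictMono (tauFun A) := by
  have hAf := init_eq_filter h
  intro i j hij
  by_cases hi : (i : ℕ) < A.card <;> by_cases hj : (j : ℕ) < A.card
  · simp only [tauFun, dif_pos hi, dif_pos hj]
    exact (A.orderEmbOfFin rfl).strictMono (Fin.mk_lt_mk.mpr hij)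
  · have h1 : (tauFun A i : ℕ) < A.card := h _ (tauFun_mem_left hi)
    have h2 : ¬ ((tauFun A j : ℕ) < A.card) := by
      have hmem : tauFun A j ∉ A := Finset.mem_compl.mp (tauFun_mem_right hj)
      intro hlt
      exact hmem ((Finset.ext_iff.mp hAf (tauFun A j)).mpr
        (mem_filter.mpr ⟨mem_univ _, hlt⟩))
    exact Fin.lt_def.mpr (by omega)
  · omega
  · simp only [tauFun, dif_neg hi, dif_neg hj]
    exact (Aᶜ.orderEmbOfFin (compl_card A)).strictMono
      (Fin.mk_lt_mk.mpr (by have := Fin.lt_def.mp hij; omega))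

lemma tauE_id {A : Finset (Fin n)} (h : Init A) : tauE A = 1 := by
  have hcard : (univ : Finset (Fin n)).card = n := by simp
  have h1 : tauFun A = (univ : Finset (Fin n)).orderEmbOfFin hcard :=
    Finset.orderEmbOfFin_unique hcard (fun x => mem_univ _) (tauFun_strictMono h)
  have h2 : (id : Fin n → Fin n) = (univ : Finset (Fin n)).orderEmbOfFin hcard :=
    Finset.orderEmbOfFin_unique hcard (fun x => mem_univ _) strictMono_id
  refine Equiv.ext fun i => ?_
  show tauFun A i = i
  rw [h1, ← h2]
  rfl

lemma mem_tauE_iff {A : Finset (Fin n)} {x : Fin n} :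
    x ∈ A ↔ ((tauE A).symm x : ℕ) < A.card := by
  have hx : tauE A ((tauE A).symm x) = x := (tauE A).apply_symm_apply x
  constructor
  · intro hxA
    by_contra hc
    have := tauFun_mem_right hc
    rw [show tauFun A ((tauE A).symm x) = x from hx, Finset.mem_compl] at this
    exact this hxA
  · intro hc
    have := tauFun_mem_left hc
    rwa [show tauFun A ((tauE A).symm x) = x from hx] at this

lemma filter_P_tauE {A : Finset (Fin n)} (h1 : 0 < A.card) (h2 : ¬ Init A) :
    (univ : Finset (Fin n)).filter (P (tauE A))
      = {⟨A.card - 1, by have := card_le A; omega⟩} := by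
  ext i
  simp only [mem_filter, mem_univ, true_and, mem_singleton]
  constructor
  · intro hP
    have := descent_card hP
    exact Fin.ext (show (i : ℕ) = A.card - 1 by omega)
  · rintro rfl
    exact descent_at h1 h2

lemma Dcount_tauE {A : Finset (Fin n)} (h1 : 0 < A.card) (h2 : ¬ Init A) :
    ((univ : Finset (Fin n)).filter (P (tauE A))).card = 1 := by
  rw [filter_P_tauE h1 h2]; simp

lemma tauE_inj {A B : Finset (Fin n)} (hA1 : 0 < A.card) (hA2 : ¬ Init A)
    (hB1 : 0 < B.card) (hB2 : ¬ Init B) (h : tauE A = tauE B) : A = B := by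
  have hfA := filter_P_tauE hA1 hA2
  have hfB := filter_P_tauE hB1 hB2
  rw [h, hfB] at hfA
  have hcard : A.card = B.card := by
    have := Fin.mk_eq_mk.mp (Finset.singleton_inj.mp hfA.symm)
    omega
  ext x
  rw [mem_tauE_iff, mem_tauE_iff, h, hcard]

lemma tauE_zero {A : Finset (Fin n)} (hn : 0 < n) (h0 : (⟨0, hn⟩ : Fin n) ∈ A) :
    tauE A ⟨0, hn⟩ = ⟨0, hn⟩ := by
  have hpos : 0 < A.card := Finset.card_pos.mpr ⟨_, h0⟩
  show tauFun A ⟨0, hn⟩ = ⟨0, hn⟩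
  simp only [tauFun, dif_pos hpos]
  have := Finset.orderEmbOfFin_zero (rfl : A.card = A.card) hpos
  rw [this]
  refine le_antisymm (A.min'_le _ h0) ?_
  exact Fin.mk_le_mk.mpr (Nat.zero_le _)


lemma step_lt (τ : Equiv.Perm (Fin n)) (i j : Fin n) (hj : (j : ℕ) = (i : ℕ) + 1)
    (hnp : ¬ P τ i) : τ i < τ j := by
  have hne : τ i ≠ τ j := fun he => by
    have := τ.injective he
    rw [this] at hj
    omega
  rcases lt_or_ge (τ i) (τ j) with hl | hg
  · exact hl
  · exact absurd ⟨j, hj, lt_of_le_of_ne hg hne.symm⟩ hnp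

lemma chain_lt (τ : Equiv.Perm (Fin n)) (i0 : Fin n) (huniq : ∀ i, P τ i → i = i0)
    (a b : Fin n) (hab : (a : ℕ) < (b : ℕ))
    (hr : (b : ℕ) ≤ (i0 : ℕ) ∨ (i0 : ℕ) < (a : ℕ)) : τ a < τ b := by
  have key : ∀ m : ℕ, ∀ hm : m < n, (a : ℕ) < m → (m ≤ (i0 : ℕ) ∨ (i0 : ℕ) < (a : ℕ)) →
      τ a < τ ⟨m, hm⟩ := by
    intro m
    induction m with
    | zero => omega
    | succ k ih =>
      intro hm ham hrr
      have hkn : k < n := by omega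
      have hnP : ¬ P τ ⟨k, hkn⟩ := by
        intro hPk
        have := huniq _ hPk
        rw [Fin.ext_iff] at this
        simp at this
        omega
      rcases Nat.lt_or_ge (a : ℕ) k with hak | hak
      · exact lt_trans (ih hkn hak (by omega)) (step_lt τ ⟨k, hkn⟩ ⟨k + 1, hm⟩ rfl hnP)
      · have hake : (a : ℕ) = k := by omega
        have ha : a = ⟨k, hkn⟩ := Fin.ext hake
        rw [ha]
        exact step_lt τ ⟨k, hkn⟩ ⟨k + 1, hm⟩ rfl hnP
  have := key (b : ℕ) b.isLt hab hr
  rwa [Fin.eta] at this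

lemma recon (hn : 0 < n) (τ : Equiv.Perm (Fin n))
    (hD : ((univ : Finset (Fin n)).filter (P τ)).card = 1) :
    ∃ A : Finset (Fin n), ¬ Init A ∧ 0 < A.card ∧ tauE A = τ ∧
      (τ ⟨0, hn⟩ = ⟨0, hn⟩ → (⟨0, hn⟩ : Fin n) ∈ A) := by
  obtain ⟨i0, hi0⟩ := Finset.card_eq_one.mp hD
  have hP0 : P τ i0 := by
    have : i0 ∈ (univ : Finset (Fin n)).filter (P τ) := hi0 ▸ mem_singleton_self i0
    exact (mem_filter.mp this).2
  have huniq : ∀ i, P τ i → i = i0 := fun i hi => by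
    have : i ∈ (univ : Finset (Fin n)).filter (P τ) := mem_filter.mpr ⟨mem_univ _, hi⟩
    rw [hi0] at this
    exact mem_singleton.mp this
  obtain ⟨j0, hj0, hlt0⟩ := hP0
  set d := (i0 : ℕ) with hd
  have hdn : d + 1 < n := by have := j0.isLt; omega
  set A := Finset.image τ ((univ : Finset (Fin n)).filter (fun i : Fin n => (i : ℕ) ≤ d))
    with hA
  have hfc : ((univ : Finset (Fin n)).filter (fun i : Fin n => (i : ℕ) ≤ d)).card = d + 1 := by
    have : ((univ : Finset (Fin n)).filter (fun i : Fin n => (i : ℕ) ≤ d))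
        = ((univ : Finset (Fin n)).filter (fun i : Fin n => (i : ℕ) < d + 1)) := by
      apply Finset.filter_congr; intro x _; simp [Nat.lt_succ_iff]
    rw [this, card_filter_lt (by omega)]
  have hAcard : A.card = d + 1 := by
    rw [hA, Finset.card_image_of_injective _ τ.injective, hfc]
  have hmemA : ∀ x : Fin n, x ∈ A ↔ ∃ i : Fin n, (i : ℕ) ≤ d ∧ τ i = x := by
    intro x
    simp only [hA, mem_image, mem_filter, mem_univ, true_and]
  -- first part
  have hf1mono : StrictMono (fun k : Fin A.card => τ ⟨(k : ℕ), by have := k.isLt; omega⟩) := by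
    intro k k' hkk'
    exact chain_lt τ i0 huniq _ _ (by simpa using hkk')
      (Or.inl (by have := k'.isLt; simp; omega))
  have hf1mem : ∀ k : Fin A.card, τ ⟨(k : ℕ), by have := k.isLt; omega⟩ ∈ A := by
    intro k
    rw [hmemA]
    exact ⟨⟨(k : ℕ), by have := k.isLt; omega⟩, show (k : ℕ) ≤ d by have := k.isLt; omega, rfl⟩
  have hf1 := Finset.orderEmbOfFin_unique (rfl : A.card = A.card) hf1mem hf1mono
  -- second part
  have hcc : Aᶜ.card = n - (d + 1) := by rw [compl_card, hAcard]
  have hf2mono : StrictMono (fun k : Fin (n - A.card) =>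
      τ ⟨d + 1 + (k : ℕ), by have := k.isLt; omega⟩) := by
    intro k k' hkk'
    exact chain_lt τ i0 huniq _ _ (by simp; exact hkk') (Or.inr (by simp; omega))
  have hf2mem : ∀ k : Fin (n - A.card),
      τ ⟨d + 1 + (k : ℕ), by have := k.isLt; omega⟩ ∈ Aᶜ := by
    intro k
    rw [Finset.mem_compl, hmemA]
    rintro ⟨i, hi, hieq⟩
    have := τ.injective hieq
    rw [Fin.ext_iff] at this
    simp at this
    omega
  have hf2 := Finset.orderEmbOfFin_unique (compl_card A) hf2mem hf2mono
  have htau : tauE A = τ := by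
    refine Equiv.ext fun i => ?_
    show tauFun A i = τ i
    by_cases h : (i : ℕ) < A.card
    · have he : tauFun A i = A.orderEmbOfFin rfl ⟨(i : ℕ), h⟩ := by
        simp only [tauFun, dif_pos h]
      rw [he, ← hf1]
    · have he : tauFun A i = Aᶜ.orderEmbOfFin (compl_card A)
          ⟨(i : ℕ) - A.card, by have := i.isLt; omega⟩ := by
        simp only [tauFun, dif_neg h]
      rw [he, ← hf2]
      exact congrArg τ (Fin.ext (show d + 1 + ((i : ℕ) - A.card) = (i : ℕ) by omega))
  refine ⟨A, ?_, by omega, htau, ?_⟩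
  · intro hI
    have h1 : τ = 1 := by rw [← htau]; exact tauE_id hI
    rw [h1] at hlt0
    simp only [Equiv.Perm.one_apply] at hlt0
    rw [Fin.lt_def] at hlt0
    omega
  · intro h0
    rw [hmemA]
    exact ⟨⟨0, hn⟩, by simp, h0⟩


lemma card_S (hn : 0 < n) :
    ((univ : Finset (Equiv.Perm (Fin n))).filter
        (fun τ => τ ⟨0, hn⟩ = ⟨0, hn⟩ ∧ ((univ : Finset (Fin n)).filter (P τ)).card = 1)).card
      = ((univ : Finset (Finset (Fin n))).filter
        (fun A => (⟨0, hn⟩ : Fin n) ∈ A ∧ ¬ Init A)).card := by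
  refine (Finset.card_bij (fun A _ => tauE A) ?_ ?_ ?_).symm
  · intro A hA
    rw [mem_filter] at hA ⊢
    obtain ⟨-, h0, hI⟩ := hA
    have hpos : 0 < A.card := Finset.card_pos.mpr ⟨_, h0⟩
    exact ⟨mem_univ _, tauE_zero hn h0, Dcount_tauE hpos hI⟩
  · intro A hA B hB h
    rw [mem_filter] at hA hB
    exact tauE_inj (Finset.card_pos.mpr ⟨_, hA.2.1⟩) hA.2.2
      (Finset.card_pos.mpr ⟨_, hB.2.1⟩) hB.2.2 h
  · intro τ hτ
    rw [mem_filter] at hτ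
    obtain ⟨-, hz, hD⟩ := hτ
    obtain ⟨A, hI, hpos, htau, hmem⟩ := recon hn τ hD
    exact ⟨A, mem_filter.mpr ⟨mem_univ _, hmem hz, hI⟩, htau⟩

lemma card_zero_mem (hn : 0 < n) :
    ((univ : Finset (Finset (Fin n))).filter
      (fun A => (⟨0, hn⟩ : Fin n) ∈ A)).card = 2 ^ (n - 1) := by
  have h1 : ((univ : Finset (Finset (Fin n))).filter (fun A => (⟨0, hn⟩ : Fin n) ∈ A)).card
      = (((univ : Finset (Fin n)).erase ⟨0, hn⟩).powerset).card := by
    refine Finset.card_bij' (fun A _ => A.erase ⟨0, hn⟩) (fun B _ => insert ⟨0, hn⟩ B)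
      ?_ ?_ ?_ ?_
    · intro A hA
      rw [Finset.mem_powerset]
      exact Finset.erase_subset_erase _ (Finset.subset_univ A)
    · intro B hB
      rw [mem_filter]
      exact ⟨mem_univ _, Finset.mem_insert_self _ _⟩
    · intro A hA
      rw [mem_filter] at hA
      exact Finset.insert_erase hA.2
    · intro B hB
      rw [Finset.mem_powerset] at hB
      exact Finset.erase_insert (fun hzB => (Finset.mem_erase.mp (hB hzB)).1 rfl)
  rw [h1, Finset.card_powerset, Finset.card_erase_of_mem (mem_univ _)]
  simp

lemma card_init (hn : 0 < n) :
    ((univ : Finset (Finset (Fin n))).filter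
      (fun A => (⟨0, hn⟩ : Fin n) ∈ A ∧ Init A)).card = n := by
  have h1 : ((univ : Finset (Fin n))).card
      = ((univ : Finset (Finset (Fin n))).filter
          (fun A => (⟨0, hn⟩ : Fin n) ∈ A ∧ Init A)).card := by
    refine Finset.card_bij
      (fun k _ => (univ : Finset (Fin n)).filter (fun x : Fin n => (x : ℕ) ≤ (k : ℕ)))
      ?_ ?_ ?_
    · intro k _
      rw [mem_filter]
      have hcard : ((univ : Finset (Fin n)).filter
          (fun x : Fin n => (x : ℕ) ≤ (k : ℕ))).card = (k : ℕ) + 1 := by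
        have he : ((univ : Finset (Fin n)).filter (fun x : Fin n => (x : ℕ) ≤ (k : ℕ)))
            = ((univ : Finset (Fin n)).filter (fun x : Fin n => (x : ℕ) < (k : ℕ) + 1)) := by
          apply Finset.filter_congr; intro x _; simp [Nat.lt_succ_iff]
        rw [he, card_filter_lt (by have := k.isLt; omega)]
      refine ⟨mem_univ _, mem_filter.mpr ⟨mem_univ _, by simp⟩, ?_⟩
      intro x hx
      rw [hcard]
      have := (mem_filter.mp hx).2
      omega
    · intro k _ k' _ h
      have ha : k ∈ (univ : Finset (Fin n)).filter (fun x : Fin n => (x : ℕ) ≤ (k' : ℕ)) := by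
        rw [← h]; exact mem_filter.mpr ⟨mem_univ _, le_refl _⟩
      have hb : k' ∈ (univ : Finset (Fin n)).filter (fun x : Fin n => (x : ℕ) ≤ (k : ℕ)) := by
        rw [h]; exact mem_filter.mpr ⟨mem_univ _, le_refl _⟩
      have h1 := (mem_filter.mp ha).2
      have h2 := (mem_filter.mp hb).2
      exact Fin.ext (le_antisymm h1 h2)
    · intro A hA
      rw [mem_filter] at hA
      obtain ⟨-, h0, hI⟩ := hA
      have hpos : 0 < A.card := Finset.card_pos.mpr ⟨_, h0⟩
      have hcle := card_le A
      refine ⟨⟨A.card - 1, by omega⟩, mem_univ _, ?_⟩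
      have hiff : ∀ x : Fin n, x ∈ A ↔ (x : ℕ) < A.card := by
        intro x
        have := Finset.ext_iff.mp (init_eq_filter hI) x
        simpa using this
      ext x
      rw [mem_filter, hiff]
      simp only [mem_univ, true_and]
      omega
  rw [← h1]
  simp

end GSRaux


/-- Number of rising sequences of a permutation of `Fin n` (0-indexed values:
value `i` stands for card `i+1`, and `π j` is the card at position `j`). -/
def risingSequences {n : ℕ} (π : Equiv.Perm (Fin n)) : ℕ :=
  1 + (Finset.univ.filter (fun i : Fin n =>
      ∃ j : Fin n, (j : ℕ) = (i : ℕ) + 1 ∧ π.symm j < π.symm i)).card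

/-- The GSR riffle shuffle distribution on `S_n`: `(n+1)/2^n` on the identity,
`1/2^n` on each permutation with exactly two rising sequences, `0` otherwise. -/
noncomputable def Qgsr (n : ℕ) (π : Equiv.Perm (Fin n)) : ℝ :=
  if π = 1 then ((n : ℝ) + 1) / 2 ^ n
  else if risingSequences π = 2 then 1 / 2 ^ n else 0

open Finset in
lemma risingSequences_eq {n : ℕ} (π : Equiv.Perm (Fin n)) :
    risingSequences π = 1 + ((univ : Finset (Fin n)).filter (GSRaux.P π.symm)).card := by
  rw [risingSequences]
  congr 1

open Finset in
lemma risingSequences_one {n : ℕ} : risingSequences (1 : Equiv.Perm (Fin n)) = 1 := by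
  rw [risingSequences_eq]
  have : ((univ : Finset (Fin n)).filter (GSRaux.P (1 : Equiv.Perm (Fin n)).symm)) = ∅ := by
    ext i
    simp only [mem_filter, mem_univ, true_and, Finset.notMem_empty, iff_false]
    rintro ⟨j, hj, hlt⟩
    have h1 : (1 : Equiv.Perm (Fin n)).symm = 1 := rfl
    rw [h1] at hlt
    simp only [Equiv.Perm.one_apply] at hlt
    rw [Fin.lt_def] at hlt
    omega
  rw [this]
  simp

open Finset in
/-- The probability that the top card after a GSR riffle shuffle is card 1
equals `(1 + 2^{n-1})/2^n`, which is strictly greater than `1/2`. -/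
theorem gsr_top_card_is_one (n : ℕ) (hn : 0 < n) :
    (∑ π ∈ Finset.univ.filter
        (fun π : Equiv.Perm (Fin n) => π ⟨0, hn⟩ = ⟨0, hn⟩), Qgsr n π)
      = (1 + (2 : ℝ) ^ (n - 1)) / 2 ^ n ∧
    (1 : ℝ) / 2 < (1 + (2 : ℝ) ^ (n - 1)) / 2 ^ n := by
  classical
  have hp : (0 : ℝ) < 2 ^ n := by positivity
  constructor
  · -- the counting part
    -- cardinality of the key set
    have hcard : ((univ : Finset (Equiv.Perm (Fin n))).filter
        (fun π => π ⟨0, hn⟩ = ⟨0, hn⟩ ∧ risingSequences π = 2)).card + n = 2 ^ (n - 1) := by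
      have e1 : ((univ : Finset (Equiv.Perm (Fin n))).filter
          (fun π => π ⟨0, hn⟩ = ⟨0, hn⟩ ∧ risingSequences π = 2)).card
          = ((univ : Finset (Equiv.Perm (Fin n))).filter
          (fun τ => τ ⟨0, hn⟩ = ⟨0, hn⟩ ∧
            ((univ : Finset (Fin n)).filter (GSRaux.P τ)).card = 1)).card := by
        refine Finset.card_bij (fun π _ => π.symm) ?_ ?_ ?_
        · intro π hπ
          rw [mem_filter] at hπ ⊢
          obtain ⟨-, hz, hrs⟩ := hπ
          beta_reduce
          refine ⟨mem_univ _, ?_, ?_⟩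
          · exact (Equiv.symm_apply_eq π).mpr hz.symm
          · rw [risingSequences_eq] at hrs
            omega
        · intro a _ b _ h
          simpa using congrArg Equiv.symm h
        · intro τ hτ
          rw [mem_filter] at hτ
          obtain ⟨-, hz, hD⟩ := hτ
          refine ⟨τ.symm, mem_filter.mpr ⟨mem_univ _, ?_, ?_⟩, by simp⟩
          · exact (Equiv.symm_apply_eq τ).mpr hz.symm
          · rw [risingSequences_eq]
            simp only [Equiv.symm_symm]
            have hD' : ((univ : Finset (Fin n)).filter (fun x => GSRaux.P τ x)).card = 1 := by
              convert hD
            omega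
      rw [e1, GSRaux.card_S hn]
      have e2 := Finset.card_filter_add_card_filter_not
        (s := (univ : Finset (Finset (Fin n))).filter (fun A => (⟨0, hn⟩ : Fin n) ∈ A))
        (p := fun A => GSRaux.Init A)
      rw [Finset.filter_filter, Finset.filter_filter] at e2
      rw [GSRaux.card_zero_mem hn] at e2
      have e3 := GSRaux.card_init hn
      have e4 : ((univ : Finset (Finset (Fin n))).filter
            (fun A => (⟨0, hn⟩ : Fin n) ∈ A ∧ ¬ GSRaux.Init A)).card
          + ((univ : Finset (Finset (Fin n))).filter
            (fun A => (⟨0, hn⟩ : Fin n) ∈ A ∧ GSRaux.Init A)).card = 2 ^ (n - 1) := by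
        omega
      omega
    -- sum splitting
    have hsplit := Finset.sum_filter_add_sum_filter_not
      ((univ : Finset (Equiv.Perm (Fin n))).filter
        (fun π : Equiv.Perm (Fin n) => π ⟨0, hn⟩ = ⟨0, hn⟩))
      (fun π => π = 1) (Qgsr n)
    have h1 : ((univ : Finset (Equiv.Perm (Fin n))).filter
        (fun π : Equiv.Perm (Fin n) => π ⟨0, hn⟩ = ⟨0, hn⟩)).filter (fun π => π = 1)
        = {1} := by
      ext π
      simp only [mem_filter, mem_univ, true_and, mem_singleton]
      constructor
      · rintro ⟨-, h⟩; exact h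
      · rintro rfl; exact ⟨rfl, rfl⟩
    have hsum1 : (∑ π ∈ ((univ : Finset (Equiv.Perm (Fin n))).filter
        (fun π : Equiv.Perm (Fin n) => π ⟨0, hn⟩ = ⟨0, hn⟩)).filter (fun π => π = 1),
        Qgsr n π) = ((n : ℝ) + 1) / 2 ^ n := by
      rw [h1, Finset.sum_singleton, Qgsr, if_pos rfl]
    have hsum2 : (∑ π ∈ ((univ : Finset (Equiv.Perm (Fin n))).filter
        (fun π : Equiv.Perm (Fin n) => π ⟨0, hn⟩ = ⟨0, hn⟩)).filter (fun π => ¬ π = 1),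
        Qgsr n π)
        = (((univ : Finset (Equiv.Perm (Fin n))).filter
        (fun π => π ⟨0, hn⟩ = ⟨0, hn⟩ ∧ risingSequences π = 2)).card : ℝ) * (1 / 2 ^ n) := by
      have heach : ∀ π ∈ ((univ : Finset (Equiv.Perm (Fin n))).filter
          (fun π : Equiv.Perm (Fin n) => π ⟨0, hn⟩ = ⟨0, hn⟩)).filter (fun π => ¬ π = 1),
          Qgsr n π = if risingSequences π = 2 then 1 / 2 ^ n else 0 := by
        intro π hπ
        rw [mem_filter] at hπ
        rw [Qgsr, if_neg hπ.2]
      rw [Finset.sum_congr rfl heach, ← Finset.sum_filter]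
      have hfe : (((univ : Finset (Equiv.Perm (Fin n))).filter
          (fun π : Equiv.Perm (Fin n) => π ⟨0, hn⟩ = ⟨0, hn⟩)).filter
            (fun π => ¬ π = 1)).filter (fun π => risingSequences π = 2)
          = (univ : Finset (Equiv.Perm (Fin n))).filter
            (fun π => π ⟨0, hn⟩ = ⟨0, hn⟩ ∧ risingSequences π = 2) := by
        rw [Finset.filter_filter, Finset.filter_filter]
        apply Finset.filter_congr
        intro π _
        constructor
        · rintro ⟨h1, -, h2⟩; exact ⟨h1, h2⟩
        · rintro ⟨h1, h2⟩
          refine ⟨h1, fun he => ?_, h2⟩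
          rw [he, risingSequences_one] at h2
          omega
      rw [hfe, Finset.sum_const, nsmul_eq_mul]
    rw [← hsplit, hsum1, hsum2]
    have hc : ((((univ : Finset (Equiv.Perm (Fin n))).filter
        (fun π => π ⟨0, hn⟩ = ⟨0, hn⟩ ∧ risingSequences π = 2)).card : ℕ) : ℝ)
        = 2 ^ (n - 1) - (n : ℝ) := by
      have h := hcard
      have h2 : ((((univ : Finset (Equiv.Perm (Fin n))).filter
          (fun π => π ⟨0, hn⟩ = ⟨0, hn⟩ ∧ risingSequences π = 2)).card : ℕ) : ℝ) + (n : ℝ)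
          = (2 : ℝ) ^ (n - 1) := by
        exact_mod_cast congrArg (Nat.cast : ℕ → ℝ) h
      linarith
    rw [hc]
    field_simp
    ring
  · -- the inequality part
    have h2 : (2 : ℝ) ^ n = 2 ^ (n - 1) * 2 := by
      rw [← pow_succ]
      congr 1
      omega
    rw [div_lt_div_iff₀ (by norm_num) hp]
    nlinarith [pow_pos (show (0 : ℝ) < 2 by norm_num) (n - 1)]
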